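/- With the sets F_n and D_n defined by the recursive Mex algorithm, for every n ≥ 0 any two distinct elements of F_n ∩ [Mex(F_n) + Mex(D_n), ∞) differ by at least 3. -/

import Mathlib

/-- Minimum excluded value of a set of natural numbers. -/
noncomputable def mex (S : Set ℕ) : ℕ := sInf {m : ℕ | m ∉ S}

/-- Coordinates of a set of triples. -/
def coords (G : Set (ℕ × ℕ × ℕ)) : Set ℕ :=
  {k | ∃ x ∈ G, k = x.1 ∨ k = x.2.1 ∨ k = x.2.2}

/-- Pairwise coordinate differences of a set of triples. -/
def diffs (G : Set (ℕ × ℕ × ℕ)) : Set ℕ :=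
  {d | ∃ x ∈ G, d = x.2.1 - x.1 ∨ d = x.2.2 - x.2.1 ∨ d = x.2.2 - x.1}

/-- One step of the Mex algorithm: the next P-position. -/
noncomputable def step (G : Set (ℕ × ℕ × ℕ)) : ℕ × ℕ × ℕ :=
  let F := coords G
  let D := diffs G
  let a := mex F
  let b := mex ((fun d => a + d) '' D ∪ Set.Icc 1 a ∪ F)
  let c := mex ((fun d => b + d) '' D ∪ Set.Icc 1 b ∪ F)
  (a, b, c)

/-- The sets `G_n` of P-positions computed by the Mex algorithm. -/
noncomputable def Gset : ℕ → Set (ℕ × ℕ × ℕ)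
  | 0 => {(0, 0, 0)}
  | n + 1 => Gset n ∪ {step (Gset n)}

/-- The `n`-th P-position `(v_1(n), v_2(n), v_3(n))`. -/
noncomputable def v : ℕ → ℕ × ℕ × ℕ
  | 0 => (0, 0, 0)
  | n + 1 => step (Gset n)

noncomputable def v1 (n : ℕ) : ℕ := (v n).1
noncomputable def v2 (n : ℕ) : ℕ := (v n).2.1
noncomputable def v3 (n : ℕ) : ℕ := (v n).2.2

/-- `F_n`: the set of coordinates of elements of `G_n`. -/
noncomputable def Fset (n : ℕ) : Set ℕ := coords (Gset n)

/-- `D_n`: the set of pairwise coordinate differences over `G_n`. -/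
noncomputable def Dset (n : ℕ) : Set ℕ := diffs (Gset n)

/-!
Write `f = mex F_n` and `m = mex D_n`. Four facts are carried along by induction on `n`:
every element of `F_n` is at most `f + 2m - 3`, every element of `D_n` at most `2m - 2`,
no two consecutive integers `≥ m` both lie in `D_n`, and the elements of `F_n` that are
`≥ f + m` are pairwise at distance `≥ 3`.
The next triple `(a, b, c)` then has `a = f` and `f + m ≤ b ≤ f + m + 2`: everything below
`f + m` is excluded, while `f + m + 1` and `f + m + 2` can neither both be excluded through `F_n`
(sparseness) nor both through `f + D_n` (no consecutive large differences). Moreover `c = b + m`,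
because `b + m ≥ f + 2m` lies above all of `F_n`. So `c` is at least `3` above every old
coordinate, while `a` and `b` stay below the new threshold `mex F_{n+1} + mex D_{n+1}`: the
sparse region only ever gains `c`.
-/

section Mex

variable {S : Set ℕ} {k n : ℕ}

lemma mex_le_of_notMem (h : k ∉ S) : mex S ≤ k := Nat.sInf_le h

lemma mem_of_lt_mex (h : k < mex S) : k ∈ S := by
  by_contra hk
  exact (mex_le_of_notMem hk).not_gt h

lemma mex_notMem (hS : S.Finite) : mex S ∉ S := by
  refine Nat.sInf_mem (s := {m | m ∉ S}) ?_
  simpa [Set.compl_def] using hS.infinite_compl.nonempty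

lemma le_mex_of_forall_lt_mem (hS : S.Finite) (h : ∀ k < n, k ∈ S) : n ≤ mex S := by
  by_contra hn
  exact mex_notMem hS (h _ (not_le.mp hn))

lemma one_le_mex (hS : S.Finite) (h0 : 0 ∈ S) : 1 ≤ mex S :=
  le_mex_of_forall_lt_mem hS fun k hk => by rwa [Nat.lt_one_iff.mp hk]

lemma mex_singleton_zero : mex {0} = 1 :=
  le_antisymm (mex_le_of_notMem (by simp)) (one_le_mex (Set.finite_singleton 0) rfl)

end Mex

lemma coords_union_singleton (G : Set (ℕ × ℕ × ℕ)) (t : ℕ × ℕ × ℕ) :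
    coords (G ∪ {t}) = coords G ∪ {t.1, t.2.1, t.2.2} := by
  ext k
  simp [coords, or_and_right, exists_or, or_assoc]

lemma diffs_union_singleton (G : Set (ℕ × ℕ × ℕ)) (t : ℕ × ℕ × ℕ) :
    diffs (G ∪ {t}) = diffs G ∪ {t.2.1 - t.1, t.2.2 - t.2.1, t.2.2 - t.1} := by
  ext k
  simp [diffs, or_and_right, exists_or, or_assoc]

def excluded (F D : Set ℕ) (x : ℕ) : Set ℕ := (fun d => x + d) '' D ∪ Set.Icc 1 x ∪ F

lemma step_eq (G : Set (ℕ × ℕ × ℕ)) :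
    step G = (mex (coords G), mex (excluded (coords G) (diffs G) (mex (coords G))),
      mex (excluded (coords G) (diffs G)
        (mex (excluded (coords G) (diffs G) (mex (coords G)))))) := rfl

section Excluded

variable {F D : Set ℕ} {x k : ℕ}

lemma excluded_finite (hF : F.Finite) (hD : D.Finite) : (excluded F D x).Finite :=
  ((hD.image _).union (Set.finite_Icc _ _)).union hF

lemma add_le_mex_excluded (hF : F.Finite) (hD : D.Finite) (hF0 : 0 ∈ F) :
    x + mex D ≤ mex (excluded F D x) := by
  refine le_mex_of_forall_lt_mem (excluded_finite hF hD) fun k hk => ?_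
  rcases Nat.eq_zero_or_pos k with rfl | hk0
  · exact Or.inr hF0
  rcases le_or_gt k x with hkx | hxk
  · exact Or.inl (Or.inr ⟨hk0, hkx⟩)
  · obtain ⟨d, rfl⟩ := Nat.exists_eq_add_of_le hxk.le
    exact Or.inl (Or.inl ⟨d, mem_of_lt_mex (by omega), rfl⟩)

lemma mem_excluded_iff_of_lt (hk : x < k) :
    k ∈ excluded F D x ↔ k - x ∈ D ∨ k ∈ F := by
  simp only [excluded, Set.mem_union, Set.mem_image, Set.mem_Icc]
  constructor
  · rintro ((⟨d, hd, rfl⟩ | h) | h)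
    · exact Or.inl (by simpa using hd)
    · omega
    · exact Or.inr h
  · rintro (h | h)
    · exact Or.inl (Or.inl ⟨k - x, h, by omega⟩)
    · exact Or.inr h

end Excluded

structure MexInvariant (F D : Set ℕ) : Prop where
  finite_F : F.Finite
  finite_D : D.Finite
  zero_mem_F : 0 ∈ F
  zero_mem_D : 0 ∈ D
  add_three_le : ∀ x ∈ F, x + 3 ≤ mex F + 2 * mex D
  add_two_le : ∀ d ∈ D, d + 2 ≤ 2 * mex D
  succ_notMem : ∀ d ∈ D, mex D ≤ d → d + 1 ∉ D
  sparse : ∀ x ∈ F, ∀ y ∈ F, mex F + mex D ≤ x → mex F + mex D ≤ y → x < y → x + 3 ≤ y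

lemma mexInvariant_zero : MexInvariant {0} {0} where
  finite_F := Set.finite_singleton 0
  finite_D := Set.finite_singleton 0
  zero_mem_F := rfl
  zero_mem_D := rfl
  add_three_le := by simp [mex_singleton_zero]
  add_two_le := by simp [mex_singleton_zero]
  succ_notMem := by simp [mex_singleton_zero]
  sparse := by simp [mex_singleton_zero]

namespace MexInvariant

variable {F D : Set ℕ} (h : MexInvariant F D)
include h

lemma mex_add_mem_of_lt_mex_excluded {i : ℕ} (hi : 1 ≤ i ∧ i ≤ 2)
    (hlt : mex F + mex D + i < mex (excluded F D (mex F))) : mex D + i ∈ D := by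
  have hmid : ∀ j ≤ i, mex F + mex D + j ∈ excluded F D (mex F) :=
    fun j hj => mem_of_lt_mex (by omega)
  have hm := one_le_mex h.finite_D h.zero_mem_D
  have hthreshold : mex F + mex D ∈ F := by
    have := (mem_excluded_iff_of_lt (by omega)).mp (hmid 0 (Nat.zero_le i))
    simpa [mex_notMem h.finite_D] using this
  rcases (mem_excluded_iff_of_lt (by omega)).mp (hmid i le_rfl) with hD | hF
  · simpa [Nat.add_assoc, Nat.add_sub_cancel_left] using hD
  · have := h.sparse _ hthreshold _ hF le_rfl (by omega) (by omega)
    omega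

lemma mex_excluded_le : mex (excluded F D (mex F)) ≤ mex F + mex D + 2 := by
  by_contra hlt
  have h1 := h.mex_add_mem_of_lt_mex_excluded (i := 1) (by omega) (by omega)
  have h2 := h.mex_add_mem_of_lt_mex_excluded (i := 2) (by omega) (by omega)
  exact h.succ_notMem _ h1 (by omega) h2

lemma mex_excluded_eq {b : ℕ} (hb : mex F + mex D ≤ b) :
    mex (excluded F D b) = b + mex D := by
  refine le_antisymm (mex_le_of_notMem fun hmem => ?_)
    (add_le_mex_excluded h.finite_F h.finite_D h.zero_mem_F)
  have hm := one_le_mex h.finite_D h.zero_mem_D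
  rcases (mem_excluded_iff_of_lt (by omega)).mp hmem with hD | hF
  · exact mex_notMem h.finite_D (by simpa using hD)
  · have := h.add_three_le _ hF
    omega

lemma union_triple {a b c : ℕ} (ha : a = mex F) (hb : a + mex D ≤ b) (hb' : b ≤ a + mex D + 2)
    (hb1 : a + mex D + 1 < b → mex D + 1 ∈ D) (hc : c = b + mex D) :
    MexInvariant (F ∪ {a, b, c}) (D ∪ {b - a, c - b, c - a}) := by
  have hF : (F ∪ {a, b, c}).Finite := h.finite_F.union (Set.toFinite _)
  have hD : (D ∪ {b - a, c - b, c - a}).Finite := h.finite_D.union (Set.toFinite _)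
  have hm := one_le_mex h.finite_D h.zero_mem_D
  have hf' : a < mex (F ∪ {a, b, c}) := by
    refine le_mex_of_forall_lt_mem hF fun k hk => ?_
    rcases (Nat.lt_succ_iff.mp hk).lt_or_eq with hk | rfl
    · exact Or.inl (mem_of_lt_mex (ha ▸ hk))
    · exact Or.inr (Set.mem_insert _ _)
  have hm' : b - a < mex (D ∪ {b - a, c - b, c - a}) := by
    refine le_mex_of_forall_lt_mem hD fun k hk => ?_
    simp only [Set.mem_union, Set.mem_insert_iff, Set.mem_singleton_iff]
    by_cases hkm : k < mex D
    · exact Or.inl (mem_of_lt_mex hkm)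
    by_cases hk1 : k = mex D + 1 ∧ a + mex D + 1 < b
    · exact Or.inl (hk1.1 ▸ hb1 hk1.2)
    · omega
  refine ⟨hF, hD, Or.inl h.zero_mem_F, Or.inl h.zero_mem_D, ?_, ?_, ?_, ?_⟩
  · rintro x (hx | hx)
    · have := h.add_three_le x hx
      omega
    · simp only [Set.mem_insert_iff, Set.mem_singleton_iff] at hx
      omega
  · rintro d (hd | hd)
    · have := h.add_two_le d hd
      omega
    · simp only [Set.mem_insert_iff, Set.mem_singleton_iff] at hd
      omega
  · intro d hd hmd hd1
    simp only [Set.mem_union, Set.mem_insert_iff, Set.mem_singleton_iff] at hd hd1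
    rcases hd with hd | hd
    · have := h.add_two_le d hd
      rcases hd1 with hd1 | hd1
      · exact h.succ_notMem d hd (by omega) hd1
      · omega
    · rcases hd1 with hd1 | hd1
      · have := h.add_two_le _ hd1
        omega
      · omega
  · have above : ∀ x ∈ F ∪ {a, b, c},
        mex (F ∪ {a, b, c}) + mex (D ∪ {b - a, c - b, c - a}) ≤ x → x ∈ F ∨ x = c := by
      rintro x (hx | rfl | rfl | rfl) hx'
      · exact Or.inl hx
      · omega
      · omega
      · exact Or.inr rfl
    intro x hx y hy hx' hy' hxy
    rcases above x hx hx' with hxF | rfl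
    · have := h.add_three_le x hxF
      rcases above y hy hy' with hyF | rfl
      · exact h.sparse x hxF y hyF (by omega) (by omega) hxy
      · omega
    · rcases above y hy hy' with hyF | rfl
      · have := h.add_three_le y hyF
        omega
      · omega

end MexInvariant

lemma mexInvariant_Fset_Dset : ∀ n, MexInvariant (Fset n) (Dset n)
  | 0 => by simpa [Fset, Dset, Gset, coords, diffs] using mexInvariant_zero
  | n + 1 => by
    have h := mexInvariant_Fset_Dset n
    have hb := add_le_mex_excluded (x := mex (Fset n)) h.finite_F h.finite_D h.zero_mem_F
    change MexInvariant (coords (Gset n ∪ {step (Gset n)})) (diffs (Gset n ∪ {step (Gset n)}))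
    rw [coords_union_singleton, diffs_union_singleton, step_eq]
    exact h.union_triple rfl hb h.mex_excluded_le
      (h.mex_add_mem_of_lt_mex_excluded ⟨le_rfl, one_le_two⟩) (h.mex_excluded_eq hb)

theorem stmt16 : ∀ n : ℕ, ∀ a ∈ Fset n, ∀ b ∈ Fset n,
    mex (Fset n) + mex (Dset n) ≤ a → mex (Fset n) + mex (Dset n) ≤ b → a ≠ b →
    3 ≤ |(a : ℤ) - b| := by
  intro n a ha b hb hta htb hab
  have h := mexInvariant_Fset_Dset n
  rw [le_abs]
  rcases hab.lt_or_gt with hlt | hlt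
  · have := h.sparse a ha b hb hta htb hlt
    omega
  · have := h.sparse b hb a ha htb hta hlt
    omega
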